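/- Let X = ℝ^d equipped with a norm that is strictly convex, with dual X*, and let u ∈ X* with ‖u‖_{X*} < 1. Let (μ_n)_{n∈ℕ} and μ be Borel probability measures on X with μ_n → μ weakly, and assume that μ has a unique u-geometric quantile y*. Then for any sequence (y_n)_{n∈ℕ} such that each y_n is a u-geometric quantile of μ_n, one has ‖y_n − y*‖ → 0 as n → ∞. -/

import Mathlib

open MeasureTheory Filter

noncomputable def gqObj {X : Type*} [NormedAddCommGroup X] [NormedSpace ℝ X]
    [MeasurableSpace X] (μ : Measure X) (u : X →L[ℝ] ℝ) (y : X) : ℝ :=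
  (∫ x, (‖y - x‖ - ‖x‖) ∂μ) - u y

section aux
variable {X : Type*} [NormedAddCommGroup X] [NormedSpace ℝ X] [MeasurableSpace X] [BorelSpace X]

lemma gq_pt_bound (y x : X) : |‖y - x‖ - ‖x‖| ≤ ‖y‖ := by
  have := abs_norm_sub_norm_le (y - x) (-x)
  simpa using this

/-- The integrand as a bounded continuous function. -/
noncomputable def gqFun (y : X) : BoundedContinuousFunction X ℝ :=
  BoundedContinuousFunction.ofNormedAddCommGroup (fun x => ‖y - x‖ - ‖x‖)
    (by fun_prop) ‖y‖ (fun x => by simpa using gq_pt_bound y x)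

@[simp] lemma gqFun_apply (y x : X) : gqFun y x = ‖y - x‖ - ‖x‖ := rfl



lemma gq_integrable (ν : Measure X) [IsFiniteMeasure ν] (y : X) :
    Integrable (fun x => ‖y - x‖ - ‖x‖) ν :=
  (gqFun y).integrable ν

lemma gqObj_zero (ν : Measure X) (u : X →L[ℝ] ℝ) : gqObj ν u 0 = 0 := by
  simp [gqObj]

lemma gqObj_lipschitz (ν : Measure X) [IsProbabilityMeasure ν] (u : X →L[ℝ] ℝ) (a b : X) :
    |gqObj ν u a - gqObj ν u b| ≤ (1 + ‖u‖) * ‖a - b‖ := by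
  have h1 : gqObj ν u a - gqObj ν u b
      = (∫ x, ((‖a - x‖ - ‖x‖) - (‖b - x‖ - ‖x‖)) ∂ν) - u (a - b) := by
    rw [integral_sub (gq_integrable ν a) (gq_integrable ν b)]
    simp [gqObj]; ring
  rw [h1]
  have h2 : |∫ x, ((‖a - x‖ - ‖x‖) - (‖b - x‖ - ‖x‖)) ∂ν| ≤ ‖a - b‖ := by
    rw [← Real.norm_eq_abs]
    refine (norm_integral_le_integral_norm _).trans ?_
    simp only [Real.norm_eq_abs]
    calc ∫ x, |(‖a - x‖ - ‖x‖) - (‖b - x‖ - ‖x‖)| ∂ν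
        ≤ ∫ _x, ‖a - b‖ ∂ν := by
          refine integral_mono ((gq_integrable ν a).sub (gq_integrable ν b)).abs
            (integrable_const _) (fun x => ?_)
          have := abs_norm_sub_norm_le (a - x) (b - x)
          simpa [sub_sub_sub_cancel_right] using this
      _ = ‖a - b‖ := by simp
  have h3 : |u (a - b)| ≤ ‖u‖ * ‖a - b‖ := by
    simpa using u.le_opNorm (a - b)
  calc |(∫ x, ((‖a - x‖ - ‖x‖) - (‖b - x‖ - ‖x‖)) ∂ν) - u (a - b)|
      ≤ |∫ x, ((‖a - x‖ - ‖x‖) - (‖b - x‖ - ‖x‖)) ∂ν| + |u (a - b)| := abs_sub _ _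
    _ ≤ (1 + ‖u‖) * ‖a - b‖ := by nlinarith [h2, h3]

/-- cutoff function: 1 on ball R, 0 outside ball R+1. -/
noncomputable def cutoff (R : ℝ) : BoundedContinuousFunction X ℝ :=
  BoundedContinuousFunction.ofNormedAddCommGroup (fun x => max 0 (min 1 (R + 1 - ‖x‖)))
    (by fun_prop) 1 (fun x => by
      rw [Real.norm_eq_abs, abs_le]
      constructor
      · linarith [le_max_left 0 (min 1 (R + 1 - ‖x‖))]
      · exact max_le zero_le_one (min_le_left _ _))

@[simp] lemma cutoff_apply (R : ℝ) (x : X) : cutoff R x = max 0 (min 1 (R + 1 - ‖x‖)) := rfl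

lemma cutoff_nonneg (R : ℝ) (x : X) : 0 ≤ cutoff R x := le_max_left _ _
lemma cutoff_le_one (R : ℝ) (x : X) : cutoff R x ≤ 1 :=
  max_le zero_le_one (min_le_left _ _)
lemma cutoff_eq_one (R : ℝ) (x : X) (h : ‖x‖ ≤ R) : cutoff R x = 1 := by
  have h1 : min 1 (R + 1 - ‖x‖) = 1 := min_eq_left (by linarith)
  rw [cutoff_apply, h1, max_eq_right zero_le_one]
lemma cutoff_eq_zero (R : ℝ) (x : X) (h : R + 1 ≤ ‖x‖) : cutoff R x = 0 := by
  have h1 : min 1 (R + 1 - ‖x‖) ≤ 0 := le_trans (min_le_right _ _) (by linarith)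
  rw [cutoff_apply, max_eq_left h1]

lemma cutoff_integral_nonneg (ν : Measure X) [IsProbabilityMeasure ν] (R : ℝ) :
    0 ≤ ∫ x, cutoff R x ∂ν :=
  integral_nonneg (cutoff_nonneg R)

lemma cutoff_integral_le_one (ν : Measure X) [IsProbabilityMeasure ν] (R : ℝ) :
    ∫ x, cutoff R x ∂ν ≤ 1 := by
  calc ∫ x, cutoff R x ∂ν ≤ ∫ _x, (1:ℝ) ∂ν :=
      integral_mono ((cutoff R).integrable ν) (integrable_const _) (cutoff_le_one R)
    _ = 1 := by simp

/-- Coercivity bound. -/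
lemma gqObj_coercive (ν : Measure X) [IsProbabilityMeasure ν] (u : X →L[ℝ] ℝ)
    (R : ℝ) (y : X) (hy : R + 1 ≤ ‖y‖) :
    -(1 + ‖u‖) * ‖y‖ + (2 * ‖y‖ - 2 * (R + 1)) * ∫ x, cutoff R x ∂ν ≤ gqObj ν u y := by
  have hc : 0 ≤ 2 * ‖y‖ - 2 * (R + 1) := by linarith
  have key : ∀ x : X, -‖y‖ + (2 * ‖y‖ - 2 * (R + 1)) * cutoff R x ≤ ‖y - x‖ - ‖x‖ := by
    intro x
    rcases le_or_gt (R + 1) ‖x‖ with h | h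
    · rw [cutoff_eq_zero R x h]
      have := abs_norm_sub_norm_le (y - x) (-x)
      simp only [norm_neg, sub_neg_eq_add, sub_add_cancel] at this
      have := abs_le.mp (gq_pt_bound y x)
      linarith [this.1]
    · have h1 : (2 * ‖y‖ - 2 * (R + 1)) * cutoff R x ≤ 2 * ‖y‖ - 2 * (R + 1) := by
        nlinarith [cutoff_le_one R x, cutoff_nonneg R x]
      have h2 : ‖y‖ - ‖x‖ ≤ ‖y - x‖ := by
        have := norm_sub_norm_le y x
        linarith [abs_le.mp (abs_norm_sub_norm_le y x)]
      linarith
  have hInt : Integrable (fun x => -‖y‖ + (2 * ‖y‖ - 2 * (R + 1)) * cutoff R x) ν :=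
    (integrable_const _).add (((cutoff R).integrable ν).const_mul _)
  have := integral_mono hInt (gq_integrable ν y) key
  rw [integral_add (integrable_const _) (((cutoff R).integrable ν).const_mul _),
    integral_const, integral_const_mul] at this
  simp only [probReal_univ, ENNReal.toReal_one, smul_eq_mul, one_mul] at this
  have hu : u y ≤ ‖u‖ * ‖y‖ := le_trans (le_abs_self _) (by simpa using u.le_opNorm y)
  simp only [gqObj]
  nlinarith

end aux

lemma gqObj_eq_bcf {X : Type*} [NormedAddCommGroup X] [NormedSpace ℝ X] [MeasurableSpace X] [BorelSpace X]
    (ν : Measure X) (u : X →L[ℝ] ℝ) (w : X) :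
    gqObj ν u w = (∫ x, gqFun w x ∂ν) - u w := rfl

/-- On a finite-dimensional strictly convex normed space, if `μ n → μ` weakly and `μ`
has a unique `u`-geometric quantile `y*`, then any `u`-geometric quantiles of the `μ n`
converge in norm to `y*`. -/
theorem stmt19 {X : Type*} [NormedAddCommGroup X] [NormedSpace ℝ X]
    [FiniteDimensional ℝ X] [StrictConvexSpace ℝ X] [MeasurableSpace X] [BorelSpace X]
    (μs : ℕ → Measure X) (μ : Measure X)
    [∀ n, IsProbabilityMeasure (μs n)] [IsProbabilityMeasure μ]
    (hconv : ∀ g : BoundedContinuousFunction X ℝ,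
      Tendsto (fun n => ∫ x, g x ∂(μs n)) atTop (nhds (∫ x, g x ∂μ)))
    (u : X →L[ℝ] ℝ) (hu : ‖u‖ < 1) (ystar : X)
    (hstar : {y : X | ∀ z : X, gqObj μ u y ≤ gqObj μ u z} = {ystar})
    (y : ℕ → X)
    (hy : ∀ (n : ℕ) (z : X), gqObj (μs n) u (y n) ≤ gqObj (μs n) u z) :
    Tendsto (fun n => ‖y n - ystar‖) atTop (nhds 0) := by
  set a := ‖u‖ with ha
  have ha0 : 0 ≤ a := norm_nonneg u
  set ε : ℝ := (1 - a) / 8 with hε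
  have hε0 : 0 < ε := by rw [hε]; linarith
  set s : ℝ := (1 + a) / 2 + ε with hs
  have hs1 : s ≤ 1 := by rw [hs, hε]; linarith
  -- pointwise convergence of the objectives along any sequence tending to atTop
  have hptw : ∀ (m : ℕ → ℕ), Tendsto m atTop atTop → ∀ w : X,
      Tendsto (fun k => gqObj (μs (m k)) u w) atTop (nhds (gqObj μ u w)) := by
    intro m hm w
    have h := ((hconv (gqFun w)).comp hm).sub_const (u w)
    simpa [gqObj_eq_bcf, Function.comp_def] using h
  -- choose R with ∫ cutoff R dμ ≥ s + ε
  obtain ⟨R, hR0, hRμ⟩ : ∃ R : ℝ, 0 ≤ R ∧ s + ε ≤ ∫ x, cutoff R x ∂μ := by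
    have hmono : Monotone (fun n : ℕ => Metric.closedBall (0 : X) (n : ℝ)) := by
      intro i j hij
      exact Metric.closedBall_subset_closedBall (by exact_mod_cast hij)
    have hunion : (⋃ n : ℕ, Metric.closedBall (0 : X) (n : ℝ)) = Set.univ := by
      ext x
      simp only [Set.mem_iUnion, Metric.mem_closedBall, dist_zero_right, Set.mem_univ, iff_true]
      obtain ⟨n, hn⟩ := exists_nat_ge ‖x‖
      exact ⟨n, hn⟩
    have htend := tendsto_measure_iUnion_atTop (μ := μ) hmono
    rw [hunion] at htend
    have h1 : (μ Set.univ) = 1 := measure_univ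
    rw [h1] at htend
    have htr : Tendsto (fun n : ℕ => (μ (Metric.closedBall (0 : X) (n : ℝ))).toReal)
        atTop (nhds 1) := by
      have := (ENNReal.tendsto_toReal ENNReal.one_ne_top).comp htend
      simpa [Function.comp_def] using this
    have hlt : s + ε < 1 := by rw [hs, hε]; linarith
    obtain ⟨n, hn⟩ := (htr.eventually (eventually_gt_nhds hlt)).exists
    refine ⟨(n : ℝ), Nat.cast_nonneg n, ?_⟩
    have hind : ∫ x, (Metric.closedBall (0 : X) (n : ℝ)).indicator (fun _ => (1:ℝ)) x ∂μ
        = (μ (Metric.closedBall (0 : X) (n : ℝ))).toReal := by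
      rw [integral_indicator_const (1 : ℝ) Metric.isClosed_closedBall.measurableSet]
      simp [measureReal_def]
    have hmono2 : ∫ x, (Metric.closedBall (0 : X) (n : ℝ)).indicator (fun _ => (1:ℝ)) x ∂μ
        ≤ ∫ x, cutoff (n : ℝ) x ∂μ := by
      refine integral_mono ((integrable_const (1:ℝ)).indicator
        Metric.isClosed_closedBall.measurableSet) ((cutoff _).integrable μ) (fun x => ?_)
      by_cases hx : x ∈ Metric.closedBall (0 : X) (n : ℝ)
      · rw [Set.indicator_of_mem hx]
        rw [Metric.mem_closedBall, dist_zero_right] at hx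
        exact le_of_eq (cutoff_eq_one _ _ hx).symm
      · rw [Set.indicator_of_notMem hx]
        exact cutoff_nonneg _ _
    rw [hind] at hmono2
    linarith
  -- eventually the quantiles are bounded by M
  set M : ℝ := max (R + 1) ((R + 1) / ε) with hM
  have hbdd : ∀ᶠ n in atTop, ‖y n‖ ≤ M := by
    have hcv := hconv (cutoff R)
    have : ∀ᶠ n in atTop, s < ∫ x, cutoff R x ∂(μs n) := by
      refine hcv.eventually (eventually_gt_nhds ?_)
      linarith
    filter_upwards [this] with n hn
    rcases le_or_gt ‖y n‖ (R + 1) with h | h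
    · exact le_trans h (le_max_left _ _)
    · refine le_trans ?_ (le_max_right _ _)
      have hco := gqObj_coercive (μs n) u R (y n) h.le
      have hle0 : gqObj (μs n) u (y n) ≤ 0 := by
        have := hy n 0
        rwa [gqObj_zero] at this
      have hint1 : ∫ x, cutoff R x ∂(μs n) ≤ 1 := cutoff_integral_le_one _ _
      have hcoef : 0 ≤ 2 * ‖y n‖ - 2 * (R + 1) := by linarith
      rw [le_div_iff₀ hε0]
      have hprod : (2 * ‖y n‖ - 2 * (R + 1)) * s
          ≤ (2 * ‖y n‖ - 2 * (R + 1)) * ∫ x, cutoff R x ∂(μs n) :=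
        mul_le_mul_of_nonneg_left hn.le hcoef
      have hR1 : 0 < R + 1 := by linarith
      have h2 : (2 * s - (1 + a)) * ‖y n‖ = 2 * ε * ‖y n‖ := by rw [hs]; ring
      have h3 : (R + 1) * s ≤ R + 1 := by nlinarith
      nlinarith [hco, hle0, hprod, h2, h3]
  -- subsequence argument
  refine tendsto_of_subseq_tendsto (fun ns hns => ?_)
  obtain ⟨N, hN⟩ := eventually_atTop.mp hbdd
  have hfreq : ∃ᶠ k in atTop, y (ns k) ∈ Metric.closedBall (0 : X) M := by
    refine ((hns.eventually (eventually_ge_atTop N)).mono (fun k hk => ?_)).frequently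
    rw [Metric.mem_closedBall, dist_zero_right]
    exact hN _ hk
  obtain ⟨z, hz, φ, hφmono, hφtend⟩ :=
    (isCompact_closedBall (0 : X) M).tendsto_subseq' hfreq
  set m : ℕ → ℕ := fun k => ns (φ k) with hm
  have hmtend : Tendsto m atTop atTop := hns.comp hφmono.tendsto_atTop
  -- z is a minimizer of gqObj μ u
  have hzmin : ∀ w : X, gqObj μ u z ≤ gqObj μ u w := by
    intro w
    have hB : Tendsto (fun k => gqObj (μs (m k)) u w) atTop (nhds (gqObj μ u w)) :=
      hptw m hmtend w
    have hC : Tendsto (fun k => gqObj (μs (m k)) u z) atTop (nhds (gqObj μ u z)) :=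
      hptw m hmtend z
    have hdiff : Tendsto (fun k => gqObj (μs (m k)) u (y (m k)) - gqObj (μs (m k)) u z)
        atTop (nhds 0) := by
      have hnorm : Tendsto (fun k => (1 + ‖u‖) * ‖y (m k) - z‖) atTop (nhds 0) := by
        have h1 : Tendsto (fun k => ‖y (m k) - z‖) atTop (nhds 0) := by
          rw [← tendsto_iff_norm_sub_tendsto_zero]
          exact hφtend
        simpa using h1.const_mul (1 + ‖u‖)
      exact squeeze_zero_norm (fun k => by
        simpa [Real.norm_eq_abs] using gqObj_lipschitz (μs (m k)) u (y (m k)) z) hnorm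
    have hA : Tendsto (fun k => gqObj (μs (m k)) u (y (m k))) atTop (nhds (gqObj μ u z)) := by
      have := hdiff.add hC
      simpa using this
    exact le_of_tendsto_of_tendsto' hA hB (fun k => hy (m k) w)
  have hzeq : z = ystar := by
    have : z ∈ ({y : X | ∀ z : X, gqObj μ u y ≤ gqObj μ u z} : Set X) := hzmin
    rw [hstar] at this
    exact this
  refine ⟨φ, ?_⟩
  have : Tendsto (fun k => ‖y (ns (φ k)) - ystar‖) atTop (nhds 0) := by
    rw [← hzeq, ← tendsto_iff_norm_sub_tendsto_zero]
    exact hφtend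
  exact this
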